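/- Let G be a connected simple graph with root r, and let H be a connected graph obtained from G by deleting an edge of DFS(G). Then every κ-inversion of DFS(H) regarded as a spanning tree of G is also a κ-inversion of DFS(H) regarded as a spanning tree of H, and conversely; in particular κ(G, DFS(H)) = κ(H, DFS(H)). -/

import Mathlib

open Finset

namespace PFG

variable {n : ℕ}

/-- `deg_{Sᶜ}(i)`: the number of edges `{i,j}` of `G` with `j ∉ S`. -/
noncomputable def sDeg (G : SimpleGraph (Fin (n+1))) (S : Finset (Fin (n+1))) (i : Fin (n+1)) : ℕ :=
  Set.ncard {j : Fin (n+1) | G.Adj i j ∧ j ∉ S}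

/-- `P` is a parking function for `G` with respect to the root `r`:
for every nonempty `S ⊆ V \ {r}` there is `i ∈ S` with `P i < deg_{Sᶜ}(i)`. -/
def IsParkingFunction (G : SimpleGraph (Fin (n+1))) (r : Fin (n+1))
    (P : Fin (n+1) → ℕ) : Prop :=
  ∀ S : Finset (Fin (n+1)), S.Nonempty → r ∉ S → ∃ i ∈ S, P i < sDeg G S i

/-- The degree of a parking function: the sum of its values over non-root vertices. -/
def degPF (r : Fin (n+1)) (P : Fin (n+1) → ℕ) : ℕ := ∑ v ∈ univ.erase r, P v

/-- A spanning tree of `G` rooted at `r`, encoded by its parent function: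
each non-root vertex is adjacent (in `G`) to its parent, and iterating
the parent map from any vertex reaches the root. -/
structure RootedSpanningTree (G : SimpleGraph (Fin (n+1))) (r : Fin (n+1)) where
  parent : Fin (n+1) → Fin (n+1)
  parent_root : parent r = r
  adj_parent : ∀ v, v ≠ r → G.Adj (parent v) v
  reaches_root : ∀ v, ∃ k, parent^[k] v = r

/-- `i` is a (proper) ancestor of `j` in the rooted tree with parent map `par`. -/
def IsAncestor (par : Fin (n+1) → Fin (n+1)) (i j : Fin (n+1)) : Prop :=
  ∃ k, 0 < k ∧ par^[k] j = i

/-- An inversion: `i` is an ancestor of `j` and `i > j`. -/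
def IsInversion (par : Fin (n+1) → Fin (n+1)) (i j : Fin (n+1)) : Prop :=
  IsAncestor par i j ∧ j < i

/-- A κ-inversion: an inversion `(i,j)` such that moreover `i` is not the
root and the parent of `i` is adjacent to `j` in `G`. -/
def IsKappaInversion (G : SimpleGraph (Fin (n+1))) (r : Fin (n+1))
    (par : Fin (n+1) → Fin (n+1)) (i j : Fin (n+1)) : Prop :=
  IsAncestor par i j ∧ j < i ∧ i ≠ r ∧ G.Adj (par i) j

/-- the κ-number: the number of κ-inversions. -/
noncomputable def kappaNum (G : SimpleGraph (Fin (n+1))) (r : Fin (n+1))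
    (par : Fin (n+1) → Fin (n+1)) : ℕ :=
  Set.ncard {p : Fin (n+1) × Fin (n+1) | IsKappaInversion G r par p.1 p.2}

/-- the number of inversions. -/
noncomputable def invNum (par : Fin (n+1) → Fin (n+1)) : ℕ :=
  Set.ncard {p : Fin (n+1) × Fin (n+1) | IsInversion par p.1 p.2}

open Classical in
/-- The neighbors of `i` in `G`, listed in decreasing order. -/
noncomputable def nbrs (G : SimpleGraph (Fin (n+1))) (i : Fin (n+1)) : List (Fin (n+1)) :=
  ((univ.filter (fun j => G.Adj i j)).sort (· ≤ ·)).reverse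

/-- One step of depth-first search from vertex `i`: scan the neighbors of `i`
in decreasing order; each unvisited neighbor `j` is visited, gets parent `i`,
and the search recurses from `j`.  The state is the pair
(visited vertices, parent map). -/
noncomputable def dfsStep (G : SimpleGraph (Fin (n+1))) :
    ℕ → Fin (n+1) → Finset (Fin (n+1)) × (Fin (n+1) → Fin (n+1)) →
      Finset (Fin (n+1)) × (Fin (n+1) → Fin (n+1))
  | 0, _, st => st
  | (fuel+1), i, st =>
      (nbrs G i).foldl
        (fun st j =>
          if j ∈ st.1 then st
          else dfsStep G fuel j (insert j st.1, Function.update st.2 j i)) st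

/-- The parent map of the depth-first search tree of `G` rooted at `r`,
visiting neighbors in decreasing numerical order. -/
noncomputable def dfsParent (G : SimpleGraph (Fin (n+1))) (r : Fin (n+1)) :
    Fin (n+1) → Fin (n+1) :=
  (dfsStep G (n+1) r ({r}, fun _ => r)).2

/-- The set of edges of the rooted tree given by parent map `par`. -/
def treeEdges (r : Fin (n+1)) (par : Fin (n+1) → Fin (n+1)) : Set (Sym2 (Fin (n+1))) :=
  {e | ∃ v, v ≠ r ∧ e = s(par v, v)}

end PFG

/-!
`DFS(H)` runs exactly like `DFS(G)` until `DFS(G)` would enter `v` from its parent `p`.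
At that moment `p` and all its ancestors are visited while `v` is not, so `v` never becomes an
ancestor of `p`; and every child of `p` larger than `v` has already been explored, so its subtree
is closed off before `v` is visited and cannot contain `v`. Hence the deleted edge `{p, v}` is
never the adjacency `{parent i, j}` of a κ-inversion `(i, j)` of `DFS(H)`, and that is the only
place where adjacency in `G` and in `H` could make a difference.
-/

theorem Function.IsPeriodicPt.eq_of_iterate_eq_fixedPt {α : Type*} {f : α → α} {x y : α}
    {c k : ℕ} (hx : Function.IsPeriodicPt f c x) (hc : 0 < c) (hy : Function.IsFixedPt f y)
    (hk : f^[k] x = y) : x = y := by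
  obtain ⟨m, hm⟩ : ∃ m, c * k = m + k :=
    ⟨c * k - k, by have := Nat.le_mul_of_pos_left k hc; omega⟩
  calc x = f^[c * k] x := (hx.mul_const k).eq.symm
    _ = y := by rw [hm, Function.iterate_add_apply, hk, Function.iterate_fixed hy]

theorem Set.EqOn.iterate_eq {α : Type*} {f g : α → α} {s : Set α} (hg : Set.EqOn g f s)
    (hf : Set.MapsTo f s s) {x : α} (hx : x ∈ s) (k : ℕ) : g^[k] x = f^[k] x := by
  induction k with
  | zero => rfl
  | succ k ih =>
    rw [Function.iterate_succ_apply', Function.iterate_succ_apply', ih, hg (hf.iterate k hx)]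

namespace PFG

variable {n : ℕ}

abbrev DfsState (n : ℕ) := Finset (Fin (n+1)) × (Fin (n+1) → Fin (n+1))

noncomputable def dfsVisit (X : SimpleGraph (Fin (n+1))) (fuel : ℕ) (i : Fin (n+1))
    (st : DfsState n) (j : Fin (n+1)) : DfsState n :=
  if j ∈ st.1 then st else dfsStep X fuel j (insert j st.1, Function.update st.2 j i)

section Mechanics

variable {X : SimpleGraph (Fin (n+1))} {fuel : ℕ} {i j : Fin (n+1)} {st : DfsState n}

theorem dfsStep_succ : dfsStep X (fuel+1) i st = (nbrs X i).foldl (dfsVisit X fuel i) st := rfl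

theorem dfsVisit_of_mem (hj : j ∈ st.1) : dfsVisit X fuel i st j = st := if_pos hj

theorem dfsVisit_of_notMem (hj : j ∉ st.1) :
    dfsVisit X fuel i st j = dfsStep X fuel j (insert j st.1, Function.update st.2 j i) :=
  if_neg hj

theorem mem_nbrs {w : Fin (n+1)} : w ∈ nbrs X i ↔ X.Adj i w := by
  simp [nbrs]

theorem nbrs_pairwise_gt : (nbrs X i).Pairwise (· > ·) := by
  rw [nbrs, List.pairwise_reverse]
  exact (Finset.sortedLT_sort _).pairwise

end Mechanics

/-- `R i st st'` relates DFS states before and after work done while `i` is being scanned. -/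
structure IsDfsInvariant (R : Fin (n+1) → DfsState n → DfsState n → Prop) : Prop where
  refl : ∀ i st, R i st st
  trans : ∀ i a b c, R i a b → R i b c → R i a c
  visit : ∀ i j st st', j ∉ st.1 →
    R j (insert j st.1, Function.update st.2 j i) st' → R i st st'

namespace IsDfsInvariant

variable {R : Fin (n+1) → DfsState n → DfsState n → Prop} (X : SimpleGraph (Fin (n+1)))

theorem rel_foldl (hR : IsDfsInvariant R) {fuel : ℕ}
    (hcall : ∀ j st, R j st (dfsStep X fuel j st)) (i : Fin (n+1)) :
    ∀ (l : List (Fin (n+1))) (st : DfsState n), R i st (l.foldl (dfsVisit X fuel i) st)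
  | [], st => hR.refl i st
  | j :: l, st => by
    refine hR.trans _ _ _ _ ?_ (rel_foldl hR hcall i l _)
    by_cases hj : j ∈ st.1
    · rw [dfsVisit_of_mem hj]; exact hR.refl i st
    · rw [dfsVisit_of_notMem hj]; exact hR.visit i j st _ hj (hcall j _)

theorem rel_dfsStep (hR : IsDfsInvariant R) : ∀ fuel i st, R i st (dfsStep X fuel i st)
  | 0, i, st => hR.refl i st
  | fuel+1, i, st => hR.rel_foldl X (rel_dfsStep hR fuel) i _ st

end IsDfsInvariant

/-- What DFS work done while `i` is being scanned does to the state `st`. -/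
structure ExtendsBelow (i : Fin (n+1)) (st st' : DfsState n) : Prop where
  subset : st.1 ⊆ st'.1
  parent_eq_of_mem : ∀ u ∈ st.1, st'.2 u = st.2 u
  parent_eq_of_notMem : ∀ u ∉ st'.1, st'.2 u = st.2 u
  parent_of_new : ∀ u ∈ st'.1, u ∉ st.1 →
    st'.2 u = i ∨ (st'.2 u ∈ st'.1 ∧ st'.2 u ∉ st.1)

theorem isDfsInvariant_extendsBelow : IsDfsInvariant (n := n) ExtendsBelow where
  refl _ _ := ⟨subset_rfl, fun _ _ => rfl, fun _ _ => rfl, fun _ hu hnu => absurd hu hnu⟩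
  trans i a b c hab hbc :=
    { subset := hab.subset.trans hbc.subset
      parent_eq_of_mem := fun u hu =>
        (hbc.parent_eq_of_mem u (hab.subset hu)).trans (hab.parent_eq_of_mem u hu)
      parent_eq_of_notMem := fun u hu =>
        (hbc.parent_eq_of_notMem u hu).trans
          (hab.parent_eq_of_notMem u fun hub => hu (hbc.subset hub))
      parent_of_new := fun u hu hua => by
        by_cases hub : u ∈ b.1
        · rw [hbc.parent_eq_of_mem u hub]
          rcases hab.parent_of_new u hub hua with h | ⟨hb, ha⟩
          · exact Or.inl h
          · exact Or.inr ⟨hbc.subset hb, ha⟩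
        · rcases hbc.parent_of_new u hu hub with h | ⟨hc, hb⟩
          · exact Or.inl h
          · exact Or.inr ⟨hc, fun ha => hb (hab.subset ha)⟩ }
  visit i j st st' hj h := by
    have hne : ∀ u ∈ st.1, u ≠ j := fun u hu huj => hj (huj ▸ hu)
    refine ⟨(Finset.subset_insert j st.1).trans h.subset, fun u hu => ?_, fun u hu => ?_,
      fun u hu hust => ?_⟩
    · rw [h.parent_eq_of_mem u (Finset.mem_insert_of_mem hu)]
      exact Function.update_of_ne (hne u hu) _ _
    · rw [h.parent_eq_of_notMem u hu]
      refine Function.update_of_ne (fun huj => hu (h.subset ?_)) _ _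
      exact huj ▸ Finset.mem_insert_self j st.1
    · obtain rfl | huj := eq_or_ne u j
      · left
        rw [h.parent_eq_of_mem u (Finset.mem_insert_self u _)]
        exact Function.update_self _ _ _
      · have hu' : u ∉ insert j st.1 := by simp [huj, hust]
        rcases h.parent_of_new u hu hu' with h' | ⟨h₁, h₂⟩
        · exact Or.inr ⟨h' ▸ h.subset (Finset.mem_insert_self j _), h' ▸ hj⟩
        · exact Or.inr ⟨h₁, fun h₃ => h₂ (Finset.mem_insert_of_mem h₃)⟩

section Scan

variable {X : SimpleGraph (Fin (n+1))}

theorem extendsBelow_dfsStep (fuel : ℕ) (i : Fin (n+1)) (st : DfsState n) :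
    ExtendsBelow i st (dfsStep X fuel i st) :=
  isDfsInvariant_extendsBelow.rel_dfsStep X fuel i st

theorem extendsBelow_foldl_dfsVisit (fuel : ℕ) (i : Fin (n+1)) (l : List (Fin (n+1)))
    (st : DfsState n) : ExtendsBelow i st (l.foldl (dfsVisit X fuel i) st) :=
  isDfsInvariant_extendsBelow.rel_foldl X (extendsBelow_dfsStep fuel) i l st

variable {i : Fin (n+1)} {a b : DfsState n}

theorem ExtendsBelow.iterate_eq_of_mem (h : ExtendsBelow i a b) (ha : Set.MapsTo a.2 a.1 a.1)
    {u : Fin (n+1)} (hu : u ∈ a.1) (k : ℕ) : b.2^[k] u = a.2^[k] u :=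
  Set.EqOn.iterate_eq (fun x hx => h.parent_eq_of_mem x hx) ha hu k

theorem ExtendsBelow.iterate_new_or_eq (h : ExtendsBelow i a b) {u : Fin (n+1)} (hu : u ∈ b.1)
    (hua : u ∉ a.1) (m : ℕ) :
    (b.2^[m] u ∈ b.1 ∧ b.2^[m] u ∉ a.1) ∨ ∃ t, b.2^[t] i = b.2^[m] u := by
  induction m with
  | zero => exact Or.inl ⟨hu, hua⟩
  | succ m ih =>
    rw [Function.iterate_succ_apply']
    rcases ih with ⟨hb, ha⟩ | ⟨t, ht⟩
    · rcases h.parent_of_new _ hb ha with h' | h'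
      · exact Or.inr ⟨0, h'.symm⟩
      · exact Or.inl h'
    · exact Or.inr ⟨t + 1, by rw [Function.iterate_succ_apply', ht]⟩

theorem mem_foldl_dfsVisit {fuel : ℕ} {w : Fin (n+1)} :
    ∀ {l : List (Fin (n+1))} {st : DfsState n}, w ∈ l →
      w ∈ (l.foldl (dfsVisit X fuel i) st).1
  | j :: l, st, hw => by
    rw [List.foldl_cons]
    rcases List.mem_cons.1 hw with rfl | hw
    · apply (extendsBelow_foldl_dfsVisit fuel i l _).subset
      by_cases hw : w ∈ st.1
      · rwa [dfsVisit_of_mem hw]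
      · rw [dfsVisit_of_notMem hw]
        exact (extendsBelow_dfsStep fuel w _).subset (Finset.mem_insert_self w _)
    · exact mem_foldl_dfsVisit hw

theorem mem_dfsStep_of_adj {fuel : ℕ} {st : DfsState n} {w : Fin (n+1)} (h : X.Adj i w) :
    w ∈ (dfsStep X (fuel+1) i st).1 :=
  mem_foldl_dfsVisit (mem_nbrs.2 h)

theorem mem_of_foldl_dfsVisit_parent_eq {fuel : ℕ} {u : Fin (n+1)} :
    ∀ {l : List (Fin (n+1))} {st : DfsState n}, i ∈ st.1 → u ∉ st.1 →
      u ∈ (l.foldl (dfsVisit X fuel i) st).1 → (l.foldl (dfsVisit X fuel i) st).2 u = i →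
      u ∈ l
  | [], _, _, hu, hmem, _ => absurd hmem hu
  | j :: l, st, hi, hu, hmem, hpar => by
    rw [List.foldl_cons] at hmem hpar
    by_cases hj : j ∈ st.1
    · rw [dfsVisit_of_mem hj] at hmem hpar
      exact List.mem_cons_of_mem j (mem_of_foldl_dfsVisit_parent_eq hi hu hmem hpar)
    rw [dfsVisit_of_notMem hj] at hmem hpar
    obtain rfl | huj := eq_or_ne u j
    · exact List.mem_cons_self
    set ins : DfsState n := (insert j st.1, Function.update st.2 j i)
    have hsub := extendsBelow_dfsStep (X := X) fuel j ins
    by_cases husub : u ∈ (dfsStep X fuel j ins).1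
    · rw [(extendsBelow_foldl_dfsVisit fuel i l _).parent_eq_of_mem u husub] at hpar
      have hu' : u ∉ ins.1 := by simp [ins, huj, hu]
      rcases hsub.parent_of_new u husub hu' with h | ⟨_, h⟩ <;> rw [hpar] at h
      · exact absurd (h ▸ hi) hj
      · exact absurd (Finset.mem_insert_of_mem hi) h
    · exact List.mem_cons_of_mem j
        (mem_of_foldl_dfsVisit_parent_eq (hsub.subset (Finset.mem_insert_of_mem hi)) husub
          hmem hpar)

end Scan

structure IsPartialTree (r : Fin (n+1)) (st : DfsState n) : Prop where
  root_mem : r ∈ st.1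
  parent_root : st.2 r = r
  parent_mem : Set.MapsTo st.2 st.1 st.1
  parent_of_notMem : ∀ u ∉ st.1, st.2 u = r
  exists_iterate_eq_root : ∀ u ∈ st.1, ∃ k, st.2^[k] u = r

namespace IsPartialTree

variable {r : Fin (n+1)} {st : DfsState n}

theorem singleton (r : Fin (n+1)) : IsPartialTree r ({r}, fun _ => r) where
  root_mem := Finset.mem_singleton_self r
  parent_root := rfl
  parent_mem _ _ := Finset.mem_singleton_self r
  parent_of_notMem _ _ := rfl
  exists_iterate_eq_root _ hu := ⟨0, Finset.mem_singleton.1 hu⟩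

theorem insert (h : IsPartialTree r st) {i j : Fin (n+1)} (hi : i ∈ st.1) (hj : j ∉ st.1) :
    IsPartialTree r (insert j st.1, Function.update st.2 j i) := by
  have hne : ∀ u ∈ st.1, u ≠ j := fun u hu huj => hj (huj ▸ hu)
  have heq : Set.EqOn (Function.update st.2 j i) st.2 st.1 :=
    fun u hu => Function.update_of_ne (hne u hu) _ _
  refine ⟨Finset.mem_insert_of_mem h.root_mem, (heq h.root_mem).trans h.parent_root, ?_, ?_, ?_⟩
  · intro u hu
    rcases Finset.mem_insert.1 hu with rfl | hu
    · simp [hi]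
    · simpa [heq hu] using Finset.mem_insert_of_mem (h.parent_mem hu)
  · intro u hu
    rw [Finset.mem_insert, not_or] at hu
    show Function.update st.2 j i u = r
    rw [Function.update_of_ne hu.1]
    exact h.parent_of_notMem u hu.2
  · intro u hu
    rcases Finset.mem_insert.1 hu with rfl | hu
    · obtain ⟨k, hk⟩ := h.exists_iterate_eq_root i hi
      refine ⟨k + 1, ?_⟩
      show (Function.update st.2 u i)^[k + 1] u = r
      rw [Function.iterate_succ_apply, Function.update_self, heq.iterate_eq h.parent_mem hi, hk]
    · obtain ⟨k, hk⟩ := h.exists_iterate_eq_root u hu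
      exact ⟨k, by rw [heq.iterate_eq h.parent_mem hu, hk]⟩

theorem iterate_of_notMem (h : IsPartialTree r st) {u : Fin (n+1)} (hu : u ∉ st.1) {k : ℕ}
    (hk : 0 < k) : st.2^[k] u = r := by
  obtain ⟨k, rfl⟩ := Nat.exists_eq_add_one_of_ne_zero hk.ne'
  rw [Function.iterate_succ_apply, h.parent_of_notMem u hu, Function.iterate_fixed h.parent_root]

theorem eq_root_of_iterate_eq (h : IsPartialTree r st) {u : Fin (n+1)} (hu : u ∈ st.1) {c : ℕ}
    (hc : st.2^[c+1] u = u) : u = r :=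
  have ⟨_, hk⟩ := h.exists_iterate_eq_root u hu
  Function.IsPeriodicPt.eq_of_iterate_eq_fixedPt hc c.succ_pos h.parent_root hk

end IsPartialTree

theorem isDfsInvariant_isPartialTree (r : Fin (n+1)) :
    IsDfsInvariant (n := n) fun i a b =>
      a.1 ⊆ b.1 ∧ (i ∈ a.1 → IsPartialTree r a → IsPartialTree r b) where
  refl _ _ := ⟨subset_rfl, fun _ => id⟩
  trans _ _ _ _ hab hbc := ⟨hab.1.trans hbc.1, fun hi ha => hbc.2 (hab.1 hi) (hab.2 hi ha)⟩
  visit _ j _ _ hj h := ⟨(Finset.subset_insert j _).trans h.1,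
    fun hi ha => h.2 (Finset.mem_insert_self j _) (ha.insert hi hj)⟩

section PartialTreeRun

variable {X : SimpleGraph (Fin (n+1))} {r i : Fin (n+1)} {st : DfsState n}

theorem IsPartialTree.dfsStep_of_mem (h : IsPartialTree r st) (hi : i ∈ st.1) (fuel : ℕ) :
    IsPartialTree r (dfsStep X fuel i st) :=
  ((isDfsInvariant_isPartialTree r).rel_dfsStep X fuel i st).2 hi h

theorem IsPartialTree.foldl_dfsVisit_of_mem (h : IsPartialTree r st) (hi : i ∈ st.1) (fuel : ℕ)
    (l : List (Fin (n+1))) : IsPartialTree r (l.foldl (dfsVisit X fuel i) st) :=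
  ((isDfsInvariant_isPartialTree r).rel_foldl X
    (fun j st => (isDfsInvariant_isPartialTree r).rel_dfsStep X fuel j st) i l st).2 hi h

end PartialTreeRun

section Nbrs

variable {G X Y : SimpleGraph (Fin (n+1))} {p v u : Fin (n+1)}

theorem nbrs_congr (h : ∀ w, Y.Adj u w ↔ X.Adj u w) : nbrs Y u = nbrs X u := by
  unfold nbrs
  congr 3
  ext w
  simp [h]

theorem nbrs_deleteEdges_of_ne (hup : u ≠ p) (huv : u ≠ v) :
    nbrs (G.deleteEdges {s(p, v)}) u = nbrs G u :=
  nbrs_congr fun w => by simp [hup, huv]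

theorem nbrs_deleteEdges_self : nbrs (G.deleteEdges {s(p, v)}) p = (nbrs G p).erase v := by
  refine nbrs_pairwise_gt.eq_of_mem_iff (nbrs_pairwise_gt.sublist (List.erase_sublist)) fun w => ?_
  rw [nbrs_pairwise_gt.nodup.mem_erase_iff, mem_nbrs, mem_nbrs]
  simp only [SimpleGraph.deleteEdges_adj, Set.mem_singleton_iff, Sym2.congr_right]
  exact and_comm

end Nbrs

section SameRun

variable {X Y : SimpleGraph (Fin (n+1))} {p v : Fin (n+1)}

theorem foldl_dfsVisit_eq_of_notMem {fuel : ℕ} {i : Fin (n+1)}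
    (hcall : ∀ j st, j ∈ st.1 → v ∉ (dfsStep X fuel j st).1 →
      dfsStep Y fuel j st = dfsStep X fuel j st) :
    ∀ {l : List (Fin (n+1))} {st : DfsState n}, v ∉ (l.foldl (dfsVisit X fuel i) st).1 →
      l.foldl (dfsVisit Y fuel i) st = l.foldl (dfsVisit X fuel i) st
  | [], _, _ => rfl
  | j :: l, st, hv => by
    rw [List.foldl_cons] at hv
    rw [List.foldl_cons, List.foldl_cons]
    by_cases hj : j ∈ st.1
    · rw [dfsVisit_of_mem hj] at hv
      rw [dfsVisit_of_mem hj, dfsVisit_of_mem hj]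
      exact foldl_dfsVisit_eq_of_notMem hcall hv
    · rw [dfsVisit_of_notMem hj] at hv
      rw [dfsVisit_of_notMem hj, dfsVisit_of_notMem hj, hcall j _ (Finset.mem_insert_self j st.1)
        fun h => hv ((extendsBelow_foldl_dfsVisit fuel i l _).subset h)]
      exact foldl_dfsVisit_eq_of_notMem hcall hv

theorem dfsStep_eq_of_notMem (hnbrs : ∀ u, u ≠ p → u ≠ v → nbrs Y u = nbrs X u)
    (hpv : X.Adj p v) : ∀ (fuel : ℕ) (i : Fin (n+1)) (st : DfsState n), i ∈ st.1 →
      v ∉ (dfsStep X fuel i st).1 → dfsStep Y fuel i st = dfsStep X fuel i st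
  | 0, _, _, _, _ => rfl
  | fuel+1, i, st, hi, hv => by
    have hip : i ≠ p := by rintro rfl; exact hv (mem_dfsStep_of_adj hpv)
    have hiv : i ≠ v := by rintro rfl; exact hv ((extendsBelow_dfsStep _ i st).subset hi)
    rw [dfsStep_succ] at hv
    rw [dfsStep_succ, dfsStep_succ, hnbrs i hip hiv]
    exact foldl_dfsVisit_eq_of_notMem (dfsStep_eq_of_notMem hnbrs hpv fuel) hv

end SameRun

/-- The edge `{p, v}` cannot be the adjacency `{par i, j}` of a κ-inversion `(i, j)` of `par`. -/
structure NoKappaWitness (r : Fin (n+1)) (par : Fin (n+1) → Fin (n+1)) (p v : Fin (n+1)) :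
    Prop where
  iterate_ne : ∀ k, par^[k] p ≠ v
  not_isAncestor : ∀ i, par i = p → v < i → i ≠ r → ¬ IsAncestor par i v

theorem isKappaInversion_deleteEdges_iff {G : SimpleGraph (Fin (n+1))} {r p v : Fin (n+1)}
    {par : Fin (n+1) → Fin (n+1)} (h : NoKappaWitness r par p v) {i j : Fin (n+1)} :
    IsKappaInversion (G.deleteEdges {s(p, v)}) r par i j ↔ IsKappaInversion G r par i j := by
  refine ⟨fun ⟨ha, hlt, hir, hadj⟩ => ⟨ha, hlt, hir, hadj.1⟩,
    fun ⟨ha, hlt, hir, hadj⟩ => ⟨ha, hlt, hir, hadj, ?_⟩⟩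
  rintro ⟨(heq : s(par i, j) = s(p, v)), -⟩
  rcases Sym2.eq_iff.1 heq with ⟨hi, rfl⟩ | ⟨hi, rfl⟩
  · exact h.not_isAncestor i hi hlt hir ha
  · obtain ⟨k, -, hk⟩ := ha
    exact h.iterate_ne (k + 1) (by rw [Function.iterate_succ_apply', hk, hi])

section Witness

variable {r p v : Fin (n+1)} {st : DfsState n}

theorem IsPartialTree.noKappaWitness_of_notMem (h : IsPartialTree r st) (hp : p ∈ st.1)
    (hv : v ∉ st.1) : NoKappaWitness r st.2 p v where
  iterate_ne k hk := hv (hk ▸ h.parent_mem.iterate k hp)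
  not_isAncestor _ _ _ hwr := fun ⟨_, hk, hkw⟩ => hwr (hkw ▸ h.iterate_of_notMem hv hk)

theorem NoKappaWitness.of_extendsBelow {i : Fin (n+1)} {sub res : DfsState n}
    (h : NoKappaWitness r sub.2 p v) (hsub : IsPartialTree r sub) (hres : IsPartialTree r res)
    (hext : ExtendsBelow i sub res)
    (hchild : ∀ u ∈ res.1, u ∉ sub.1 → res.2 u = p → u < v)
    (hstack : ∀ t, res.2 (res.2^[t] i) = p → res.2^[t] i = r) (hp : p ∈ sub.1) :
    NoKappaWitness r res.2 p v where
  iterate_ne k := by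
    rw [hext.iterate_eq_of_mem hsub.parent_mem hp]
    exact h.iterate_ne k
  not_isAncestor w hwp hvw hwr := by
    rintro ⟨k, hk, hkw⟩
    by_cases hvsub : v ∈ sub.1
    · rw [hext.iterate_eq_of_mem hsub.parent_mem hvsub] at hkw
      have hwsub : w ∈ sub.1 := hkw ▸ hsub.parent_mem.iterate k hvsub
      exact h.not_isAncestor w ((hext.parent_eq_of_mem w hwsub).symm.trans hwp) hvw hwr
        ⟨k, hk, hkw⟩
    by_cases hvres : v ∈ res.1
    · rcases hext.iterate_new_or_eq hvres hvsub k with ⟨hres', hnew⟩ | ⟨t, ht⟩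
      · rw [hkw] at hres' hnew
        exact (hchild w hres' hnew hwp).not_gt hvw
      · rw [hkw] at ht
        exact hwr (ht ▸ hstack t (ht ▸ hwp))
    · exact hwr (hkw ▸ hres.iterate_of_notMem hvres hk)

end Witness

section Main

variable {X Y : SimpleGraph (Fin (n+1))} {r p v : Fin (n+1)}

theorem noKappaWitness_dfsStep_self (hnbrs : ∀ u, u ≠ p → u ≠ v → nbrs Y u = nbrs X u)
    (hYp : nbrs Y p = (nbrs X p).erase v) (hpv : X.Adj p v) {fuel : ℕ} {st : DfsState n}
    (hst : IsPartialTree r st) (hp : p ∈ st.1) (hv : v ∉ st.1)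
    (hpar : (dfsStep X (fuel+1) p st).2 v = p) :
    p ∈ (dfsStep Y (fuel+1) p st).1 ∧ NoKappaWitness r (dfsStep Y (fuel+1) p st).2 p v := by
  obtain ⟨L₁, L₂, hsplit⟩ := List.append_of_mem (mem_nbrs.2 hpv)
  have hsorted := nbrs_pairwise_gt (X := X) (i := p)
  rw [hsplit, List.pairwise_append, List.pairwise_cons] at hsorted
  have hL₁ : ∀ w ∈ L₁, v < w := fun w hw => hsorted.2.2 w hw v List.mem_cons_self
  have hL₂ : ∀ w ∈ L₂, w < v := hsorted.2.1.1
  set a := L₁.foldl (dfsVisit X fuel p) st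
  have hpa : p ∈ a.1 := (extendsBelow_foldl_dfsVisit fuel p L₁ st).subset hp
  have hva : v ∉ a.1 := by
    intro hva
    have hpar_a : a.2 v = p := by
      rw [← hpar, dfsStep_succ, hsplit, List.foldl_append]
      exact ((extendsBelow_foldl_dfsVisit fuel p _ a).parent_eq_of_mem v hva).symm
    exact lt_irrefl v (hL₁ v (mem_of_foldl_dfsVisit_parent_eq hp hv hva hpar_a))
  have hY : dfsStep Y (fuel+1) p st = L₂.foldl (dfsVisit Y fuel p) a := by
    rw [dfsStep_succ, hYp, hsplit, List.erase_append_right _ fun h => lt_irrefl v (hL₁ v h),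
      List.erase_cons_head, List.foldl_append,
      foldl_dfsVisit_eq_of_notMem (dfsStep_eq_of_notMem hnbrs hpv fuel) hva]
  rw [hY]
  have ha : IsPartialTree r a := hst.foldl_dfsVisit_of_mem hp fuel L₁
  have hres : IsPartialTree r (L₂.foldl (dfsVisit Y fuel p) a) :=
    ha.foldl_dfsVisit_of_mem hpa fuel L₂
  have hext := extendsBelow_foldl_dfsVisit (X := Y) fuel p L₂ a
  refine ⟨hext.subset hpa,
    (ha.noKappaWitness_of_notMem hpa hva).of_extendsBelow ha hres hext ?_ ?_ hpa⟩
  · exact fun u hu hua hup => hL₂ u (mem_of_foldl_dfsVisit_parent_eq hpa hua hu hup)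
  · intro t ht
    have hpr : p = r := hres.eq_root_of_iterate_eq (hext.subset hpa) (c := t)
      (by rw [Function.iterate_succ_apply', ht])
    subst hpr
    exact Function.iterate_fixed hres.parent_root t

theorem NoKappaWitness.foldl_dfsVisit {fuel : ℕ} {i : Fin (n+1)} (hip : i ≠ p)
    {st sub : DfsState n} (h : NoKappaWitness r sub.2 p v) (hst : IsPartialTree r st)
    (hsub : IsPartialTree r sub) (hext₀ : ExtendsBelow i st sub) (hi : i ∈ st.1)
    (hpst : p ∉ st.1) (hp : p ∈ sub.1) (l : List (Fin (n+1))) :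
    p ∈ (l.foldl (dfsVisit Y fuel i) sub).1 ∧
      NoKappaWitness r (l.foldl (dfsVisit Y fuel i) sub).2 p v := by
  have hext := extendsBelow_foldl_dfsVisit (X := Y) fuel i l sub
  have hext_st := isDfsInvariant_extendsBelow.trans _ _ _ _ hext₀ hext
  refine ⟨hext.subset hp, h.of_extendsBelow hsub
    (hsub.foldl_dfsVisit_of_mem (hext₀.subset hi) fuel l) hext ?_ ?_ hp⟩
  · intro u hu husub hup
    rcases hext.parent_of_new u hu husub with h' | ⟨_, h'⟩ <;> rw [hup] at h'
    · exact absurd h'.symm hip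
    · exact absurd hp h'
  · -- the ancestors of `i` were visited before `p`, so none of them is a child of `p`
    intro t ht
    have hmem : st.2^[t] i ∈ st.1 := hst.parent_mem.iterate t hi
    rw [hext_st.iterate_eq_of_mem hst.parent_mem hi, hext_st.parent_eq_of_mem _ hmem] at ht
    exact absurd (ht ▸ hst.parent_mem hmem) hpst

theorem noKappaWitness_foldl_dfsVisit_of_ne
    (hnbrs : ∀ u, u ≠ p → u ≠ v → nbrs Y u = nbrs X u) (hpv : X.Adj p v) {fuel : ℕ}
    (hcall : ∀ j st, IsPartialTree r st → j ∈ st.1 → v ∉ st.1 →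
      v ∈ (dfsStep X fuel j st).1 → (dfsStep X fuel j st).2 v = p →
      p ∈ (dfsStep Y fuel j st).1 ∧ NoKappaWitness r (dfsStep Y fuel j st).2 p v)
    {i : Fin (n+1)} (hip : i ≠ p) :
    ∀ {l : List (Fin (n+1))} {st : DfsState n}, IsPartialTree r st → i ∈ st.1 →
      v ∉ st.1 → v ∈ (l.foldl (dfsVisit X fuel i) st).1 →
      (l.foldl (dfsVisit X fuel i) st).2 v = p →
      p ∈ (l.foldl (dfsVisit Y fuel i) st).1 ∧
        NoKappaWitness r (l.foldl (dfsVisit Y fuel i) st).2 p v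
  | [], _, _, _, hv, hvres, _ => absurd hvres hv
  | j :: l, st, hst, hi, hv, hvres, hpar => by
    rw [List.foldl_cons] at hvres hpar ⊢
    by_cases hj : j ∈ st.1
    · rw [dfsVisit_of_mem hj] at hvres hpar ⊢
      exact noKappaWitness_foldl_dfsVisit_of_ne hnbrs hpv hcall hip hst hi hv hvres hpar
    rw [dfsVisit_of_notMem hj] at hvres hpar ⊢
    set ins : DfsState n := (insert j st.1, Function.update st.2 j i)
    have hjins : j ∈ ins.1 := Finset.mem_insert_self j st.1
    have hextX := extendsBelow_dfsStep (X := X) fuel j ins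
    by_cases hvsub : v ∈ (dfsStep X fuel j ins).1
    · have hpar_sub : (dfsStep X fuel j ins).2 v = p := by
        rw [← hpar]
        exact ((extendsBelow_foldl_dfsVisit fuel i l _).parent_eq_of_mem v hvsub).symm
      have hvj : v ≠ j := by
        rintro rfl
        apply hip
        rw [← hpar_sub, hextX.parent_eq_of_mem v hjins]
        simp [ins]
      have hvins : v ∉ ins.1 := by simp [ins, hvj, hv]
      have hpst : p ∉ st.1 := by
        rcases hextX.parent_of_new v hvsub hvins with h | ⟨_, h⟩ <;> rw [hpar_sub] at h
        · exact h ▸ hj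
        · exact fun hp => h (Finset.mem_insert_of_mem hp)
      obtain ⟨hpY, hY⟩ := hcall j ins (hst.insert hi hj) hjins hvins hvsub hpar_sub
      exact hY.foldl_dfsVisit hip hst ((hst.insert hi hj).dfsStep_of_mem hjins fuel)
        (isDfsInvariant_extendsBelow.visit i j st _ hj (extendsBelow_dfsStep fuel j ins))
        hi hpst hpY l
    · rw [dfsStep_eq_of_notMem hnbrs hpv fuel j ins hjins hvsub]
      exact noKappaWitness_foldl_dfsVisit_of_ne hnbrs hpv hcall hip
        ((hst.insert hi hj).dfsStep_of_mem hjins fuel)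
        (hextX.subset (Finset.mem_insert_of_mem hi)) hvsub hvres hpar

theorem noKappaWitness_dfsStep (hnbrs : ∀ u, u ≠ p → u ≠ v → nbrs Y u = nbrs X u)
    (hYp : nbrs Y p = (nbrs X p).erase v) (hpv : X.Adj p v) :
    ∀ (fuel : ℕ) (i : Fin (n+1)) (st : DfsState n), IsPartialTree r st → i ∈ st.1 →
      v ∉ st.1 → v ∈ (dfsStep X fuel i st).1 → (dfsStep X fuel i st).2 v = p →
      p ∈ (dfsStep Y fuel i st).1 ∧ NoKappaWitness r (dfsStep Y fuel i st).2 p v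
  | 0, _, _, _, _, hv, hvres, _ => absurd hvres hv
  | fuel+1, i, st, hst, hi, hv, hvres, hpar => by
    obtain rfl | hip := eq_or_ne i p
    · exact noKappaWitness_dfsStep_self hnbrs hYp hpv hst hi hv hpar
    have hiv : i ≠ v := fun h => hv (h ▸ hi)
    rw [dfsStep_succ] at hvres hpar
    rw [dfsStep_succ, hnbrs i hip hiv]
    exact noKappaWitness_foldl_dfsVisit_of_ne hnbrs hpv
      (noKappaWitness_dfsStep hnbrs hYp hpv fuel) hip hst hi hv hvres hpar

end Main

theorem noKappaWitness_dfsParent_deleteEdges {G : SimpleGraph (Fin (n+1))} {r v : Fin (n+1)}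
    (hpv : G.Adj (dfsParent G r v) v) :
    NoKappaWitness r (dfsParent (G.deleteEdges {s(dfsParent G r v, v)}) r) (dfsParent G r v) v := by
  have hext := extendsBelow_dfsStep (X := G) (n+1) r ({r}, fun _ => r)
  have hvr : v ∉ ({r} : Finset (Fin (n+1))) := by
    intro hv
    obtain rfl := Finset.mem_singleton.1 hv
    have hroot : dfsParent G v v = v := hext.parent_eq_of_mem v hv
    exact (hroot ▸ hpv).ne rfl
  have hvG : v ∈ (dfsStep G (n+1) r ({r}, fun _ => r)).1 := by
    by_contra hv
    have hroot : dfsParent G r v = r := hext.parent_eq_of_notMem v hv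
    exact hv (mem_dfsStep_of_adj (hroot ▸ hpv))
  exact (noKappaWitness_dfsStep (fun _ => nbrs_deleteEdges_of_ne) nbrs_deleteEdges_self hpv
    (n+1) r _ (.singleton r) (Finset.mem_singleton_self r) hvr hvG rfl).2

end PFG

theorem kappa_dfs_delete_edge_invariant_general {n : ℕ}
    (G : SimpleGraph (Fin (n+1))) (r : Fin (n+1))
    (v : Fin (n+1))
    (H : SimpleGraph (Fin (n+1)))
    (hH : H = G.deleteEdges {s(PFG.dfsParent G r v, v)}) :
    (∀ i j : Fin (n+1),
        PFG.IsKappaInversion H r (PFG.dfsParent H r) i j ↔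
        PFG.IsKappaInversion G r (PFG.dfsParent H r) i j) ∧
      PFG.kappaNum G r (PFG.dfsParent H r) = PFG.kappaNum H r (PFG.dfsParent H r) := by
  have hiff : ∀ i j, PFG.IsKappaInversion H r (PFG.dfsParent H r) i j ↔
      PFG.IsKappaInversion G r (PFG.dfsParent H r) i j := by
    by_cases hpv : G.Adj (PFG.dfsParent G r v) v
    · subst hH
      exact fun i j => PFG.isKappaInversion_deleteEdges_iff
        (PFG.noKappaWitness_dfsParent_deleteEdges hpv)
    · have hHG : H = G := hH.trans (SimpleGraph.deleteEdges_eq_self.2 (by simpa using hpv))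
      exact fun i j => hHG ▸ Iff.rfl
  exact ⟨hiff, congrArg Set.ncard (Set.ext fun q => (hiff q.1 q.2).symm)⟩

/-- If `H` is a connected graph obtained from `G` by deleting an edge of
`DFS(G)` (namely the tree edge `{parent v, v}` for a non-root vertex `v`),
then the κ-inversions of `DFS(H)` as a spanning tree of `G` coincide with its
κ-inversions as a spanning tree of `H`; in particular `κ(G,DFS(H)) = κ(H,DFS(H))`. -/
theorem kappa_dfs_delete_edge_invariant {n : ℕ}
    (G : SimpleGraph (Fin (n+1))) (hG : G.Connected) (r : Fin (n+1))
    (v : Fin (n+1)) (hv : v ≠ r)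
    (H : SimpleGraph (Fin (n+1)))
    (hH : H = G.deleteEdges {s(PFG.dfsParent G r v, v)})
    (hHconn : H.Connected) :
    (∀ i j : Fin (n+1),
        PFG.IsKappaInversion H r (PFG.dfsParent H r) i j ↔
        PFG.IsKappaInversion G r (PFG.dfsParent H r) i j) ∧
      PFG.kappaNum G r (PFG.dfsParent H r) = PFG.kappaNum H r (PFG.dfsParent H r) :=
  kappa_dfs_delete_edge_invariant_general G r v H hH
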